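/- Let F be the free group on generators x_1, …, x_q and let h ≥ 2. Then the second group homology of the free nilpotent group F/F_h with trivial coefficients ℤ is isomorphic, as an abelian group, to the lower central series quotient F_h/F_{h+1}: H₂(F/F_h; ℤ) ≅ F_h/F_{h+1}. -/

import Mathlib

noncomputable section

variable (G : Type*) [Group G]

/-- The second differential `d₂ : ℤ[G²] → ℤ[G]` of the inhomogeneous bar complex computing
group homology with trivial coefficients `ℤ`: `d₂(g, h) = (h) - (gh) + (g)`. -/
def barD2 : ((Fin 2 → G) →₀ ℤ) →ₗ[ℤ] ((Fin 1 → G) →₀ ℤ) :=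
  Finsupp.lift _ ℤ _ fun g =>
    Finsupp.single ![g 1] 1 - Finsupp.single ![g 0 * g 1] 1 + Finsupp.single ![g 0] 1

/-- The third differential `d₃ : ℤ[G³] → ℤ[G²]` of the inhomogeneous bar complex computing
group homology with trivial coefficients `ℤ`:
`d₃(g, h, k) = (h, k) - (gh, k) + (g, hk) - (g, h)`. -/
def barD3 : ((Fin 3 → G) →₀ ℤ) →ₗ[ℤ] ((Fin 2 → G) →₀ ℤ) :=
  Finsupp.lift _ ℤ _ fun g =>
    Finsupp.single ![g 1, g 2] 1 - Finsupp.single ![g 0 * g 1, g 2] 1 +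
      Finsupp.single ![g 0, g 1 * g 2] 1 - Finsupp.single ![g 0, g 1] 1

/-- The second group homology of `G` with trivial coefficients `ℤ`, computed as
2-cycles modulo 2-boundaries of the inhomogeneous bar complex. -/
abbrev barH2 :=
  LinearMap.ker (barD2 G) ⧸
    (LinearMap.range (barD3 G)).comap (LinearMap.ker (barD2 G)).subtype


/-!
Write `G = F/N`, `V = C₂(G)/B₂(G)` and `[a|b] ∈ V` for the class of a bar. The cocycle
`(a, b) ↦ [a|b] - [1|1]` defines a central extension `E` of `G` by `V`, and as `F` is free the
projection `F → G` lifts to `ψ : F → E`. For `r ∈ N` the element `ψ r` lies over `1`, so taking its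
`V`-component is a homomorphism on `N` that vanishes on `[N, F]`. Since
`(g, v) ↦ d₂ v + [g] - [1]` is a homomorphism `E → C₁(G)` to an abelian group, the components of
`ψ r` for `r ∈ N ∩ [F, F]` are cycles, and a chain homotopy built from a section `σ : G → F`
shows that every cycle is of this form. Conversely the factor set `σ a σ b σ(ab)⁻¹` induces a map
`V → N/[N, F]`; comparing `F → F/[N, F]` with its factorization through `E`, which differs from it
by a central factor and hence agrees with it on `[F, F]`, shows that this map inverts the first
one when `N ≤ [F, F]`.
-/

open scoped IsMulCommutative

theorem Finsupp.lift_single_one {R X M : Type*} [Semiring R] [AddCommMonoid M] [Module R M]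
    (f : X → M) (x : X) : Finsupp.lift M R X f (Finsupp.single x 1) = f x := by
  simp [Finsupp.lift_apply]

theorem MonoidHom.eq_of_mem_commutator_of_mul_inv_mem_center {H K : Type*} [Group H] [Group K]
    (f g : H →* K) (hfg : ∀ x, f x * (g x)⁻¹ ∈ Subgroup.center K) {x : H}
    (hx : x ∈ commutator H) : f x = g x := by
  let d : H →* Subgroup.center K := MonoidHom.mk' (fun x => ⟨f x * (g x)⁻¹, hfg x⟩) fun x y => by
    ext
    simp only [map_mul, mul_inv_rev, Subgroup.coe_mul]
    rw [mul_assoc (f x) (g x)⁻¹, Subgroup.mem_center_iff.mp (hfg y)]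
    simp only [mul_assoc]
  simpa [d, mul_inv_eq_one, Subtype.ext_iff] using Abelianization.commutator_subset_ker d hx

theorem factor_set_cocycle_of_mem_center {H K : Type*} [Semigroup H] [Group K] (s : H → K)
    (f : H → H → K) (hs : ∀ a b, f a b * s (a * b) = s a * s b)
    (hcenter : ∀ a b, f a b ∈ Subgroup.center K) (a b c : H) :
    f a b * f (a * b) c = f b c * f a (b * c) := by
  apply mul_right_cancel (b := s (a * (b * c)))
  calc f a b * f (a * b) c * s (a * (b * c)) = f a b * s (a * b) * s c := by
        rw [mul_assoc, ← mul_assoc a, hs, mul_assoc]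
    _ = s a * f b c * s (b * c) := by rw [hs, mul_assoc (s a) (f b c), hs, mul_assoc]
    _ = f b c * (f a (b * c) * s (a * (b * c))) := by
        rw [Subgroup.mem_center_iff.mp (hcenter b c), hs, mul_assoc]
    _ = f b c * f a (b * c) * s (a * (b * c)) := (mul_assoc _ _ _).symm

structure NormalizedCocycle₂ (A : Type*) [AddCommGroup A] where
  toFun : G → G → A
  map_one_one : toFun 1 1 = 0
  cocycle (a b c : G) : toFun a b + toFun (a * b) c = toFun b c + toFun a (b * c)

namespace NormalizedCocycle₂

variable {G} {A : Type*} [AddCommGroup A] (β : NormalizedCocycle₂ G A)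

instance : CoeFun (NormalizedCocycle₂ G A) fun _ => G → G → A := ⟨toFun⟩

theorem map_one_left (b : G) : β 1 b = 0 := by
  simpa [β.map_one_one] using β.cocycle 1 1 b

theorem map_one_right (a : G) : β a 1 = 0 := by
  simpa [β.map_one_one] using β.cocycle a 1 1

theorem map_inv_self (a : G) : β a⁻¹ a = β a a⁻¹ := by
  simpa [β.map_one_left, β.map_one_right] using (β.cocycle a a⁻¹ a).symm

@[ext]
structure Extension (β : NormalizedCocycle₂ G A) where
  base : G
  fiber : A

namespace Extension

variable {β}

instance : Mul β.Extension := ⟨fun x y => ⟨x.base * y.base, x.fiber + y.fiber + β x.base y.base⟩⟩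

instance : One β.Extension := ⟨⟨1, 0⟩⟩

instance : Inv β.Extension := ⟨fun x => ⟨x.base⁻¹, -x.fiber - β x.base x.base⁻¹⟩⟩

@[simp] theorem mul_base (x y : β.Extension) : (x * y).base = x.base * y.base := rfl

@[simp] theorem mul_fiber (x y : β.Extension) :
    (x * y).fiber = x.fiber + y.fiber + β x.base y.base := rfl

@[simp] theorem one_base : (1 : β.Extension).base = 1 := rfl

@[simp] theorem one_fiber : (1 : β.Extension).fiber = 0 := rfl

@[simp] theorem inv_base (x : β.Extension) : x⁻¹.base = x.base⁻¹ := rfl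

@[simp] theorem inv_fiber (x : β.Extension) : x⁻¹.fiber = -x.fiber - β x.base x.base⁻¹ := rfl

instance : Group β.Extension where
  mul_assoc x y z := Extension.ext (mul_assoc _ _ _) <| by
    simp only [mul_fiber, mul_base]
    rw [add_right_comm (x.fiber + y.fiber), add_assoc (x.fiber + y.fiber + z.fiber), β.cocycle]
    abel
  one_mul x := Extension.ext (one_mul _) <| by simp [β.map_one_left]
  mul_one x := Extension.ext (mul_one _) <| by simp [β.map_one_right]
  inv_mul_cancel x := Extension.ext (inv_mul_cancel _) <| by
    simp only [mul_fiber, inv_fiber, inv_base, β.map_inv_self, one_fiber]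
    abel

def proj : β.Extension →* G := MonoidHom.mk' base fun _ _ => rfl

theorem mem_center_of_base_eq_one {x : β.Extension} (hx : x.base = 1) :
    x ∈ Subgroup.center β.Extension := by
  refine Subgroup.mem_center_iff.mpr fun y => ?_
  ext
  · simp [hx]
  · simp [hx, β.map_one_left, β.map_one_right, add_comm]

end Extension

end NormalizedCocycle₂

section BarComplex

variable {G}

theorem barD2_single (a b : G) :
    barD2 G (Finsupp.single ![a, b] 1) =
      Finsupp.single ![b] 1 - Finsupp.single ![a * b] 1 + Finsupp.single ![a] 1 :=
  Finsupp.lift_single_one _ _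

theorem barD3_single (a b c : G) :
    barD3 G (Finsupp.single ![a, b, c] 1) =
      Finsupp.single ![b, c] 1 - Finsupp.single ![a * b, c] 1 +
        Finsupp.single ![a, b * c] 1 - Finsupp.single ![a, b] 1 :=
  Finsupp.lift_single_one _ _

variable (G) in
theorem barD2_comp_barD3 : barD2 G ∘ₗ barD3 G = 0 := by
  refine Finsupp.lhom_ext' fun g => LinearMap.ext_ring ?_
  obtain ⟨a, b, c, rfl⟩ : ∃ a b c : G, g = ![a, b, c] :=
    ⟨g 0, g 1, g 2, by ext i; fin_cases i <;> rfl⟩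
  simp only [LinearMap.comp_apply, Finsupp.lsingle_apply, barD3_single, map_sub, map_add,
    barD2_single, mul_assoc, LinearMap.zero_apply]
  abel

variable (G) in
abbrev Chains₂ModBoundaries := ((Fin 2 → G) →₀ ℤ) ⧸ LinearMap.range (barD3 G)

def bar (a b : G) : Chains₂ModBoundaries G := Submodule.Quotient.mk (Finsupp.single ![a, b] 1)

theorem bar_add_bar_mul (a b c : G) : bar a b + bar (a * b) c = bar b c + bar a (b * c) := by
  have h : (Submodule.Quotient.mk (barD3 G (Finsupp.single ![a, b, c] 1)) :
      Chains₂ModBoundaries G) = 0 := (Submodule.Quotient.mk_eq_zero _).mpr ⟨_, rfl⟩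
  rw [barD3_single] at h
  simp only [Submodule.Quotient.mk_add, Submodule.Quotient.mk_sub] at h
  rw [eq_comm, ← sub_eq_zero, ← h]
  simp only [bar]
  abel

variable (G) in
/-- Subtracting `[1|1]` normalizes the cocycle, so that its extension has identity `(1, 0)`. -/
def barCocycle : NormalizedCocycle₂ G (Chains₂ModBoundaries G) where
  toFun a b := bar a b - bar 1 1
  map_one_one := sub_self _
  cocycle a b c := by
    rw [← sub_eq_zero]
    calc _ = bar a b + bar (a * b) c - (bar b c + bar a (b * c)) := by abel
      _ = 0 := by rw [bar_add_bar_mul, sub_self]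

theorem barCocycle_apply (a b : G) : barCocycle G a b = bar a b - bar 1 1 := rfl

variable (G) in
def barD2Quot : Chains₂ModBoundaries G →ₗ[ℤ] (Fin 1 → G) →₀ ℤ :=
  (LinearMap.range (barD3 G)).liftQ (barD2 G) (LinearMap.range_le_ker_iff.mpr (barD2_comp_barD3 G))

theorem barD2Quot_bar (a b : G) :
    barD2Quot G (bar a b) =
      Finsupp.single ![b] 1 - Finsupp.single ![a * b] 1 + Finsupp.single ![a] 1 :=
  barD2_single a b

variable (G) in
def barH2EquivKerBarD2Quot : barH2 G ≃ₗ[ℤ] LinearMap.ker (barD2Quot G) :=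
  let π := (LinearMap.range (barD3 G)).mkQ ∘ₗ (LinearMap.ker (barD2 G)).subtype
  (Submodule.quotEquivOfEq _ _ (by rw [LinearMap.ker_comp, Submodule.ker_mkQ])).trans
    (π.quotKerEquivRange.trans (LinearEquiv.ofEq _ _ (by
      rw [LinearMap.range_comp, Submodule.range_subtype, barD2Quot, Submodule.ker_liftQ])))

variable (G) in
def extensionToChains₁ : (barCocycle G).Extension →* Multiplicative ((Fin 1 → G) →₀ ℤ) :=
  MonoidHom.mk'
    (fun x => .ofAdd (barD2Quot G x.fiber + Finsupp.single ![x.base] 1 - Finsupp.single ![1] 1))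
    fun x y => by
      apply Multiplicative.toAdd.injective
      simp only [NormalizedCocycle₂.Extension.mul_fiber, NormalizedCocycle₂.Extension.mul_base,
        barCocycle_apply, map_add, map_sub, barD2Quot_bar, mul_one, toAdd_ofAdd, toAdd_mul]
      abel

end BarComplex

namespace Hopf

section Quotient

variable {F : Type*} [Group F] (N : Subgroup F) [N.Normal]

open Classical in
def sect (g : F ⧸ N) : F := if g = 1 then 1 else g.out

theorem mk_sect (g : F ⧸ N) : ((sect N g : F) : F ⧸ N) = g := by
  unfold sect
  split_ifs with h
  · rw [h, QuotientGroup.mk_one]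
  · exact QuotientGroup.out_eq' g

theorem sect_one : sect N 1 = 1 := if_pos rfl

theorem mul_inv_sect_mem (w : F) : w * (sect N w)⁻¹ ∈ N := by
  rw [← QuotientGroup.eq_one_iff, QuotientGroup.mk_mul, QuotientGroup.mk_inv, mk_sect,
    mul_inv_cancel]

def factorSet (a b : F ⧸ N) : N :=
  ⟨sect N a * sect N b * (sect N (a * b))⁻¹, by
    rw [← QuotientGroup.eq_one_iff, QuotientGroup.mk_mul, QuotientGroup.mk_mul,
      QuotientGroup.mk_inv, mk_sect, mk_sect, mk_sect, mul_inv_cancel]⟩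

theorem factorSet_mul_sect (a b : F ⧸ N) :
    (factorSet N a b : F) * sect N (a * b) = sect N a * sect N b :=
  inv_mul_cancel_right _ _

theorem factorSet_one_one : factorSet N 1 1 = 1 :=
  Subtype.ext (by simp [factorSet, sect_one])

abbrev RelQuot := N ⧸ ⁅N, (⊤ : Subgroup F)⁆.subgroupOf N

abbrev CentralQuot := F ⧸ ⁅N, (⊤ : Subgroup F)⁆

instance : IsMulCommutative (RelQuot N) :=
  Subgroup.Normal.quotient_commutative_iff_commutator_le.mpr <|
    Subgroup.commutator_le.mpr fun r _ _ _ =>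
      Subgroup.mem_subgroupOf.mpr (Subgroup.commutator_mem_commutator r.2 (Subgroup.mem_top _))

theorem coe_mem_center {r : F} (hr : r ∈ N) :
    (r : CentralQuot N) ∈ Subgroup.center (CentralQuot N) := by
  refine Subgroup.mem_center_iff.mpr fun g => ?_
  induction g using QuotientGroup.induction_on with | H g => ?_
  rw [← QuotientGroup.mk_mul, ← QuotientGroup.mk_mul, QuotientGroup.eq]
  convert Subgroup.commutator_mem_commutator (N.inv_mem hr) (Subgroup.mem_top g⁻¹) using 1
  group

def RelQuot.incl : RelQuot N →* CentralQuot N := QuotientGroup.map _ _ N.subtype fun _ => id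

theorem RelQuot.incl_mk (r : N) : RelQuot.incl N r = ((r : F) : CentralQuot N) := rfl

theorem RelQuot.incl_injective : Function.Injective (RelQuot.incl N) := by
  refine (injective_iff_map_eq_one _).mpr fun x hx => ?_
  induction x using QuotientGroup.induction_on with | H r => ?_
  exact (QuotientGroup.eq_one_iff r).mpr
    (Subgroup.mem_subgroupOf.mpr ((QuotientGroup.eq_one_iff _).mp hx))

theorem RelQuot.incl_mem_center (x : RelQuot N) :
    RelQuot.incl N x ∈ Subgroup.center (CentralQuot N) := by
  induction x using QuotientGroup.induction_on with | H r => exact coe_mem_center N r.2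

theorem factorSet_cocycle (a b c : F ⧸ N) :
    (factorSet N a b : RelQuot N) * factorSet N (a * b) c =
      factorSet N b c * factorSet N a (b * c) := by
  apply RelQuot.incl_injective N
  simp only [map_mul, RelQuot.incl_mk]
  refine factor_set_cocycle_of_mem_center (fun g => ((sect N g : F) : CentralQuot N))
    (fun a b => ((factorSet N a b : F) : CentralQuot N)) (fun a b => ?_)
    (fun a b => coe_mem_center N (factorSet N a b).2) a b c
  rw [← QuotientGroup.mk_mul, factorSet_mul_sect, QuotientGroup.mk_mul]

def hopfMap : Chains₂ModBoundaries (F ⧸ N) →ₗ[ℤ] Additive (RelQuot N) :=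
  (LinearMap.range (barD3 (F ⧸ N))).liftQ
    (Finsupp.lift _ ℤ _ fun g => .ofMul (factorSet N (g 0) (g 1) : RelQuot N)) <| by
      refine LinearMap.range_le_ker_iff.mpr (Finsupp.lhom_ext' fun g => LinearMap.ext_ring ?_)
      obtain ⟨a, b, c, rfl⟩ : ∃ a b c : F ⧸ N, g = ![a, b, c] :=
        ⟨g 0, g 1, g 2, by ext i; fin_cases i <;> rfl⟩
      have h := congrArg Additive.ofMul (factorSet_cocycle N a b c)
      simp only [ofMul_mul] at h
      simp only [LinearMap.comp_apply, Finsupp.lsingle_apply, barD3_single, map_sub, map_add,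
        Finsupp.lift_single_one, Matrix.cons_val_zero, Matrix.cons_val_one, LinearMap.zero_apply]
      rw [← sub_eq_zero.mpr h.symm]
      abel

theorem hopfMap_bar (a b : F ⧸ N) : hopfMap N (bar a b) = .ofMul (factorSet N a b : RelQuot N) :=
  Finsupp.lift_single_one _ _

def extensionToCentralQuot : (barCocycle (F ⧸ N)).Extension →* CentralQuot N :=
  MonoidHom.mk'
    (fun x => ((sect N x.base : F) : CentralQuot N) * RelQuot.incl N (hopfMap N x.fiber).toMul)
    fun x y => by
      simp only [NormalizedCocycle₂.Extension.mul_fiber, NormalizedCocycle₂.Extension.mul_base,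
        barCocycle_apply, map_add, map_sub, hopfMap_bar, factorSet_one_one, toMul_add, toMul_sub,
        map_mul, toMul_ofMul, QuotientGroup.mk_one, div_one, RelQuot.incl_mk]
      set a := x.base
      set b := y.base
      set jx := RelQuot.incl N (hopfMap N x.fiber).toMul
      set jy := RelQuot.incl N (hopfMap N y.fiber).toMul
      have hf := Subgroup.mem_center_iff.mp (coe_mem_center N (factorSet N a b).2)
      have hjx : ∀ g, g * jx = jx * g := Subgroup.mem_center_iff.mp (RelQuot.incl_mem_center N _)
      have hsect : ((factorSet N a b : F) : CentralQuot N) * (sect N (a * b) : F) =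
          (sect N a : F) * (sect N b : F) := by
        rw [← QuotientGroup.mk_mul, factorSet_mul_sect, QuotientGroup.mk_mul]
      calc _ = (sect N (a * b) : F) * (factorSet N a b : F) * (jx * jy) := by
            rw [hf (jx * jy), mul_assoc]
        _ = (sect N a : F) * ((sect N b : F) * jx) * jy := by
            rw [hf, hsect]; simp only [mul_assoc]
        _ = _ := by rw [hjx]; simp only [mul_assoc]

end Quotient

section Free

variable {ι : Type*} (N : Subgroup (FreeGroup ι)) [N.Normal]

def liftExt : FreeGroup ι →* (barCocycle (FreeGroup ι ⧸ N)).Extension :=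
  FreeGroup.lift fun i => ⟨(FreeGroup.of i : FreeGroup ι ⧸ N), 0⟩

theorem liftExt_base (w : FreeGroup ι) : (liftExt N w).base = w := by
  have : NormalizedCocycle₂.Extension.proj.comp (liftExt N) = QuotientGroup.mk' N :=
    FreeGroup.ext_hom _ _ fun i => by simp [liftExt, NormalizedCocycle₂.Extension.proj]
  exact DFunLike.congr_fun this w

theorem liftExt_base_of_mem {r : FreeGroup ι} (hr : r ∈ N) : (liftExt N r).base = 1 := by
  rw [liftExt_base, QuotientGroup.eq_one_iff]
  exact hr

theorem commutator_le_ker_liftExt : ⁅N, ⊤⁆ ≤ (liftExt N).ker := by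
  refine Subgroup.commutator_le.mpr fun r hr g _ => ?_
  have hc := NormalizedCocycle₂.Extension.mem_center_of_base_eq_one (liftExt_base_of_mem N hr)
  rw [MonoidHom.mem_ker, map_commutatorElement, commutatorElement_eq_one_iff_mul_comm]
  exact (Subgroup.mem_center_iff.mp hc _).symm

theorem liftExt_fiber_mem_ker {r : FreeGroup ι} (hrN : r ∈ N)
    (hr : r ∈ commutator (FreeGroup ι)) :
    (liftExt N r).fiber ∈ LinearMap.ker (barD2Quot (FreeGroup ι ⧸ N)) := by
  have h := Abelianization.commutator_subset_ker ((extensionToChains₁ _).comp (liftExt N)) hr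
  rw [MonoidHom.mem_ker, MonoidHom.comp_apply, extensionToChains₁, MonoidHom.mk'_apply,
    liftExt_base_of_mem N hrN, add_sub_cancel_right, ofAdd_eq_one] at h
  exact h

def liftExtFiberHom : Additive N →+ Chains₂ModBoundaries (FreeGroup ι ⧸ N) :=
  AddMonoidHom.mk' (fun r => (liftExt N r.toMul).fiber) fun r s => by
    rw [toMul_add, Subgroup.coe_mul, map_mul, NormalizedCocycle₂.Extension.mul_fiber,
      liftExt_base_of_mem N r.toMul.2, liftExt_base_of_mem N s.toMul.2,
      (barCocycle _).map_one_one, add_zero]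

def sectChainMap : ((Fin 1 → FreeGroup ι ⧸ N) →₀ ℤ) →ₗ[ℤ] Chains₂ModBoundaries (FreeGroup ι ⧸ N) :=
  Finsupp.lift _ ℤ _ fun g => (liftExt N (sect N (g 0))).fiber - bar 1 1

theorem bar_add_sectChainMap_barD2 (a b : FreeGroup ι ⧸ N) :
    bar a b + sectChainMap N (barD2 _ (Finsupp.single ![a, b] 1)) =
      (liftExt N (factorSet N a b)).fiber := by
  have h := congrArg (fun w => (liftExt N w).fiber) (factorSet_mul_sect N a b)
  simp only [map_mul, NormalizedCocycle₂.Extension.mul_fiber, liftExt_base, mk_sect,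
    liftExt_base_of_mem N (factorSet N a b).2, (barCocycle _).map_one_left, barCocycle_apply] at h
  rw [barD2_single, map_add, map_sub, sectChainMap, Finsupp.lift_single_one,
    Finsupp.lift_single_one, Finsupp.lift_single_one]
  simp only [Matrix.cons_val_zero]
  rw [← sub_eq_zero, ← neg_eq_zero, ← sub_eq_zero.mpr h]
  abel

theorem mem_range_liftExtFiberHom {v : Chains₂ModBoundaries (FreeGroup ι ⧸ N)}
    (hv : v ∈ LinearMap.ker (barD2Quot _)) : v ∈ (liftExtFiberHom N).range := by
  have key : ∀ z, Submodule.Quotient.mk z + sectChainMap N (barD2 _ z) ∈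
      (liftExtFiberHom N).range := by
    intro z
    induction z using Finsupp.induction_linear with
    | zero => simp
    | add z w hz hw => simpa [map_add, add_add_add_comm] using add_mem hz hw
    | single g n =>
      obtain ⟨a, b, rfl⟩ : ∃ a b : FreeGroup ι ⧸ N, g = ![a, b] :=
        ⟨g 0, g 1, by ext i; fin_cases i <;> rfl⟩
      rw [← Finsupp.smul_single_one, Submodule.Quotient.mk_smul, map_zsmul, map_zsmul, ← smul_add]
      exact zsmul_mem (AddMonoidHom.mem_range.mpr
        ⟨.ofMul (factorSet N a b), (bar_add_sectChainMap_barD2 N a b).symm⟩) n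
  obtain ⟨z, rfl⟩ := Submodule.mkQ_surjective _ v
  simpa [show barD2 _ z = 0 from hv] using key z

theorem hopfMap_liftExt_fiber (hN : N ≤ commutator (FreeGroup ι)) {r : FreeGroup ι}
    (hr : r ∈ N) :
    hopfMap N (liftExt N r).fiber = .ofMul (QuotientGroup.mk ⟨r, hr⟩ : RelQuot N) := by
  have h := MonoidHom.eq_of_mem_commutator_of_mul_inv_mem_center (QuotientGroup.mk' _)
    ((extensionToCentralQuot N).comp (liftExt N)) (fun w => ?_) (hN hr)
  · simp only [MonoidHom.comp_apply, extensionToCentralQuot, MonoidHom.mk'_apply,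
      liftExt_base_of_mem N hr, sect_one, QuotientGroup.mk_one, one_mul,
      QuotientGroup.mk'_apply] at h
    rw [← RelQuot.incl_mk N ⟨r, hr⟩] at h
    exact congrArg Additive.ofMul (RelQuot.incl_injective N h).symm
  · simp only [MonoidHom.comp_apply, extensionToCentralQuot, MonoidHom.mk'_apply, liftExt_base,
      QuotientGroup.mk'_apply, mul_inv_rev]
    have hj := Subgroup.inv_mem _ (RelQuot.incl_mem_center N (hopfMap N (liftExt N w).fiber).toMul)
    rw [← mul_assoc, Subgroup.mem_center_iff.mp hj, mul_assoc, ← QuotientGroup.mk_inv,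
      ← QuotientGroup.mk_mul]
    exact Subgroup.mul_mem _ hj (coe_mem_center N (mul_inv_sect_mem N w))

theorem bijective_hopfMap_domRestrict (hN : N ≤ commutator (FreeGroup ι)) :
    Function.Bijective
      ((hopfMap N).domRestrict (LinearMap.ker (barD2Quot (FreeGroup ι ⧸ N)))) := by
  refine ⟨(injective_iff_map_eq_zero _).mpr fun v hv => ?_, fun q => ?_⟩
  · obtain ⟨r, hr⟩ := AddMonoidHom.mem_range.mp (mem_range_liftExtFiberHom N v.2)
    rw [LinearMap.domRestrict_apply, ← hr, liftExtFiberHom, AddMonoidHom.mk'_apply,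
      hopfMap_liftExt_fiber N hN r.toMul.2, ofMul_eq_zero, QuotientGroup.eq_one_iff,
      Subgroup.mem_subgroupOf] at hv
    rw [← Subtype.val_inj, ← hr, liftExtFiberHom, AddMonoidHom.mk'_apply,
      MonoidHom.mem_ker.mp (commutator_le_ker_liftExt N hv)]
    rfl
  · obtain ⟨r, hr⟩ := QuotientGroup.mk_surjective q.toMul
    refine ⟨⟨_, liftExt_fiber_mem_ker N r.2 (hN r.2)⟩, ?_⟩
    rw [LinearMap.domRestrict_apply, hopfMap_liftExt_fiber N hN r.2, hr]
    rfl

def hopfEquiv (hN : N ≤ commutator (FreeGroup ι)) :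
    barH2 (FreeGroup ι ⧸ N) ≃ₗ[ℤ] Additive (RelQuot N) :=
  (barH2EquivKerBarD2Quot _).trans
    (LinearEquiv.ofBijective _ (bijective_hopfMap_domRestrict N hN))

end Free

end Hopf

/-- Mathlib's `lowerCentralSeries` starts at `0`: the paper's `F_m` is `lowerCentralSeries (m - 1)`. -/
theorem H2_free_nilpotent_iso_lcs_quotient (q h : ℕ) (hh : 2 ≤ h) :
    Nonempty
      (barH2 (FreeGroup (Fin q) ⧸ (⊤ : Subgroup (FreeGroup (Fin q))).lowerCentralSeries (h - 1)) ≃+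
        Additive
          ((⊤ : Subgroup (FreeGroup (Fin q))).lowerCentralSeries (h - 1) ⧸
            (((⊤ : Subgroup (FreeGroup (Fin q))).lowerCentralSeries h).subgroupOf
              ((⊤ : Subgroup (FreeGroup (Fin q))).lowerCentralSeries (h - 1))))) := by
  obtain ⟨n, rfl⟩ : ∃ n, h = n + 1 := ⟨h - 1, by omega⟩
  have hN : (⊤ : Subgroup (FreeGroup (Fin q))).lowerCentralSeries n ≤ commutator _ :=
    Subgroup.lowerCentralSeries_antitone _ (by omega : 1 ≤ n)
  -- `lowerCentralSeries (n + 1)` is `⁅lowerCentralSeries n, ⊤⁆` by definition.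
  exact ⟨(Hopf.hopfEquiv _ hN).toAddEquiv⟩
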